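/- arXiv:1703.09669 — 3 statements merged into one kernel-verified Lean document; each statement's English description precedes it below -/
import Mathlib

section
/- Robbins–Siegmund almost-sure convergence theorem: on a probability space (Ω, F, P) equipped with a filtration F_1 ⊆ F_2 ⊆ ⋯ ⊆ F, let z_t, ξ_t, ζ_t (t = 1,2,…) be nonnegative, integrable, F_t-measurable random variables such that E[z_{t+1} | F_t] ≤ z_t − ζ_t + ξ_t for every t, and Σ_{t=1}^{∞} ξ_t < ∞ almost surely. Then almost surely lim_{t→∞} z_t exists and is finite, and Σ_{t=1}^{∞} ζ_t < ∞. -/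
/-!
The compensated process `M t = z t + ∑_{s<t} (ζ s - ξ s)` is a supermartingale, but it need not be
L¹-bounded because `∑ ξ` is only almost surely finite. One localizes instead: `-M (t + 1)` is at most
the `ℱ t`-measurable partial sum `∑_{s≤t} ξ s`, so stopping `-M` when that partial sum first
reaches level `i` yields a submartingale bounded above by `i`, which converges almost surely. On
the event `∑ ξ < i`, and these events exhaust `Ω` up to a null set, the stopped process is `-M`
itself. Hence `z t + ∑_{s<t} ζ s = M t + ∑_{s<t} ξ s` converges, the partial sums of `ζ` are
bounded, and `z t` converges as well.
-/

open MeasureTheory Filter Finset Topology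

namespace MeasureTheory

variable {Ω : Type*} {m0 : MeasurableSpace Ω} {μ : Measure Ω} {ℱ : Filtration ℕ m0}

theorem StronglyAdapted.stronglyMeasurable_sum_range {g : ℕ → Ω → ℝ} (hg : StronglyAdapted ℱ g)
    {n t : ℕ} (hn : n ≤ t + 1) : StronglyMeasurable[ℱ t] (fun ω => ∑ s ∈ range n, g s ω) :=
  Finset.stronglyMeasurable_fun_sum _ fun s hs =>
    (hg s).mono (ℱ.mono (Nat.lt_succ_iff.mp ((mem_range.mp hs).trans_le hn)))

theorem Submartingale.exists_ae_tendsto_of_le [IsFiniteMeasure μ] {f : ℕ → Ω → ℝ} {C : ℝ}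
    (hf : Submartingale f ℱ μ) (hC : ∀ n ω, f n ω ≤ C) :
    ∀ᵐ ω ∂μ, ∃ c, Tendsto (fun n => f n ω) atTop (𝓝 c) := by
  obtain rfl | hμ := eq_zero_or_neZero μ
  · simp
  -- after subtracting the mean value `a` of `f 0`, all means are nonnegative, and a process with
  -- nonnegative means that is bounded above is L¹-bounded
  set a := (μ.real Set.univ)⁻¹ * ∫ ω, f 0 ω ∂μ
  have hg : Submartingale (fun n ω => f n ω - a) ℱ μ := hf.sub_martingale (martingale_const ℱ μ a)
  have hbdd : ∀ n, eLpNorm (fun ω => f n ω - a) 1 μ ≤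
      (2 * μ Set.univ * ENNReal.ofReal (C - a)).toNNReal := by
    intro n
    rw [ENNReal.coe_toNNReal (by finiteness)]
    refine eLpNorm_one_le_of_le' (hg.integrable n) ?_ (ae_of_all _ fun ω => by linarith [hC n ω])
    have hmono : ∫ ω, f 0 ω ∂μ ≤ ∫ ω, f n ω ∂μ := by
      simpa using hf.setIntegral_le (Nat.zero_le n) MeasurableSet.univ
    rw [integral_sub (hf.integrable n) (integrable_const a), integral_const, smul_eq_mul,
      ← mul_assoc, mul_inv_cancel₀ measureReal_univ_ne_zero, one_mul]
    linarith
  filter_upwards [hg.exists_ae_tendsto_of_bdd hbdd] with ω ⟨c, hc⟩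
  exact ⟨c + a, by simpa using hc.add_const a⟩

theorem stoppedProcess_hittingAfter_le {f u : ℕ → Ω → ℝ} {c : ℝ} {ω : Ω} (hf₀ : f 0 ω ≤ c)
    (hfu : ∀ n, f (n + 1) ω ≤ u n ω) (n : ℕ) :
    stoppedProcess f (hittingAfter u (Set.Ici c) 0) n ω ≤ c := by
  have hle : ∀ j : ℕ, (j : WithTop ℕ) ≤ hittingAfter u (Set.Ici c) 0 ω → f j ω ≤ c := by
    rintro (_ | k) hk
    · exact hf₀
    · have hlt : (k : WithTop ℕ) < hittingAfter u (Set.Ici c) 0 ω :=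
        (WithTop.coe_lt_coe.mpr k.lt_succ_self).trans_le hk
      have hk_not := notMem_of_lt_hittingAfter hlt k.zero_le
      exact (hfu k).trans (not_le.mp hk_not).le
  obtain ⟨j, hj⟩ := WithTop.ne_top_iff_exists.mp (ne_top_of_le_ne_top (WithTop.coe_ne_top (a := n))
    (min_le_left _ (hittingAfter u (Set.Ici c) 0 ω)))
  rw [stoppedProcess, ← hj]
  exact hle j (hj.trans_le (min_le_right _ _))

theorem stoppedProcess_hittingAfter_eq {f u : ℕ → Ω → ℝ} {c : ℝ} {ω : Ω}
    (hu : ∀ n, u n ω < c) (n : ℕ) :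
    stoppedProcess f (hittingAfter u (Set.Ici c) 0) n ω = f n ω := by
  have : hittingAfter u (Set.Ici c) 0 ω = ⊤ :=
    hittingAfter_eq_top_iff.mpr fun j _ => not_le.mpr (hu j)
  exact stoppedProcess_eq_of_le (this ▸ le_top)

theorem Submartingale.exists_ae_tendsto_of_le_bddAbove [IsFiniteMeasure μ] {f u : ℕ → Ω → ℝ}
    {C : ℝ} (hf : Submartingale f ℱ μ) (hu : Adapted ℱ u) (hf₀ : ∀ ω, f 0 ω ≤ C)
    (hfu : ∀ n ω, f (n + 1) ω ≤ u n ω) (hbdd : ∀ᵐ ω ∂μ, BddAbove (Set.range fun n => u n ω)) :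
    ∀ᵐ ω ∂μ, ∃ c, Tendsto (fun n => f n ω) atTop (𝓝 c) := by
  have hstopped : ∀ i : ℕ, ∀ᵐ ω ∂μ, ∃ c, Tendsto
      (fun n => stoppedProcess f (hittingAfter u (Set.Ici (max C i)) 0) n ω) atTop (𝓝 c) :=
    fun i => (hf.stoppedProcess (hu.isStoppingTime_hittingAfter measurableSet_Ici))
      |>.exists_ae_tendsto_of_le fun n ω =>
        stoppedProcess_hittingAfter_le ((hf₀ ω).trans (le_max_left _ _)) (hfu · ω) n
  filter_upwards [ae_all_iff.mpr hstopped, hbdd] with ω hω ⟨B, hB⟩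
  obtain ⟨i, hi⟩ := exists_nat_gt B
  have hu_lt : ∀ n, u n ω < max C i :=
    fun n => ((hB ⟨n, rfl⟩).trans_lt hi).trans_le (le_max_right _ _)
  simpa only [stoppedProcess_hittingAfter_eq hu_lt] using hω i

theorem supermartingale_add_sum_sub [IsFiniteMeasure μ] {z ξ ζ : ℕ → Ω → ℝ}
    (hz : StronglyAdapted ℱ z) (hξ : StronglyAdapted ℱ ξ) (hζ : StronglyAdapted ℱ ζ)
    (hz_int : ∀ t, Integrable (z t) μ) (hξ_int : ∀ t, Integrable (ξ t) μ)
    (hζ_int : ∀ t, Integrable (ζ t) μ)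
    (hdrift : ∀ t, μ[z (t + 1)|ℱ t] ≤ᵐ[μ] fun ω => z t ω - ζ t ω + ξ t ω) :
    Supermartingale (fun t ω => z t ω + ∑ s ∈ range t, (ζ s ω - ξ s ω)) ℱ μ := by
  have hdiff : StronglyAdapted ℱ fun s ω => ζ s ω - ξ s ω := fun s => (hζ s).sub (hξ s)
  have hsum_int : ∀ t, Integrable (fun ω => ∑ s ∈ range t, (ζ s ω - ξ s ω)) μ :=
    fun t => integrable_finsetSum _ fun s _ => (hζ_int s).sub (hξ_int s)
  refine supermartingale_nat
    (fun t => (hz t).add (hdiff.stronglyMeasurable_sum_range t.le_succ))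
    (fun t => (hz_int t).add (hsum_int t)) fun t => ?_
  have hcond : μ[fun ω => z (t + 1) ω + ∑ s ∈ range (t + 1), (ζ s ω - ξ s ω)|ℱ t] =ᵐ[μ]
      μ[z (t + 1)|ℱ t] + fun ω => ∑ s ∈ range (t + 1), (ζ s ω - ξ s ω) :=
    (condExp_add (hz_int (t + 1)) (hsum_int (t + 1)) _).trans (by
      rw [condExp_of_stronglyMeasurable (ℱ.le t) (hdiff.stronglyMeasurable_sum_range le_rfl)
        (hsum_int (t + 1))])
  filter_upwards [hcond, hdrift t] with ω hω hdriftω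
  rw [hω, Pi.add_apply, sum_range_succ]
  linarith

end MeasureTheory

theorem tendsto_and_summable_of_tendsto_add_sum_sub {z ξ ζ : ℕ → ℝ} (hz : ∀ t, 0 ≤ z t)
    (hζ : ∀ t, 0 ≤ ζ t) (hξ : Summable ξ)
    (h : ∃ c, Tendsto (fun t => z t + ∑ s ∈ range t, (ζ s - ξ s)) atTop (𝓝 c)) :
    (∃ L, Tendsto z atTop (𝓝 L)) ∧ Summable ζ := by
  obtain ⟨c, hc⟩ := h
  have hv : Tendsto (fun t => z t + ∑ s ∈ range t, ζ s) atTop (𝓝 (c + ∑' s, ξ s)) := by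
    refine (hc.add hξ.hasSum.tendsto_sum_nat).congr fun t => ?_
    simp only [sum_sub_distrib]
    ring
  obtain ⟨B, hB⟩ := hv.bddAbove_range
  have hζ_sum : Summable ζ := summable_of_sum_range_le hζ fun t =>
    (le_add_of_nonneg_left (hz t)).trans (hB ⟨t, rfl⟩)
  refine ⟨⟨_, (hv.sub hζ_sum.hasSum.tendsto_sum_nat).congr fun t => ?_⟩, hζ_sum⟩
  ring

/-- Robbins–Siegmund: on a probability space with a filtration `ℱ`, if `z, ξ, ζ`
are nonnegative integrable `ℱ t`-measurable processes with
`E[z (t+1) | ℱ t] ≤ z t − ζ t + ξ t` for all `t`, and `Σ_t ξ t < ∞` a.s., then a.s.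
`lim_t z t` exists (is finite) and `Σ_t ζ t < ∞`. -/
theorem robbins_siegmund
    {Ω : Type*} {m0 : MeasurableSpace Ω} {μ : Measure Ω} [IsProbabilityMeasure μ]
    (ℱ : Filtration ℕ m0)
    (z ξ ζ : ℕ → Ω → ℝ)
    (hz_nonneg : ∀ t ω, 0 ≤ z t ω)
    (hξ_nonneg : ∀ t ω, 0 ≤ ξ t ω)
    (hζ_nonneg : ∀ t ω, 0 ≤ ζ t ω)
    (hz_meas : ∀ t, StronglyMeasurable[ℱ t] (z t))
    (hξ_meas : ∀ t, StronglyMeasurable[ℱ t] (ξ t))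
    (hζ_meas : ∀ t, StronglyMeasurable[ℱ t] (ζ t))
    (hz_int : ∀ t, Integrable (z t) μ)
    (hξ_int : ∀ t, Integrable (ξ t) μ)
    (hζ_int : ∀ t, Integrable (ζ t) μ)
    (hdrift : ∀ t, μ[z (t + 1)|ℱ t] ≤ᵐ[μ] fun ω => z t ω - ζ t ω + ξ t ω)
    (hξ_sum : ∀ᵐ ω ∂μ, Summable fun t => ξ t ω) :
    ∀ᵐ ω ∂μ, (∃ L : ℝ, Tendsto (fun t => z t ω) atTop (nhds L)) ∧
      Summable fun t => ζ t ω := by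
  set M : ℕ → Ω → ℝ := fun t ω => z t ω + ∑ s ∈ range t, (ζ s ω - ξ s ω)
  have hM : Supermartingale M ℱ μ :=
    supermartingale_add_sum_sub hz_meas hξ_meas hζ_meas hz_int hξ_int hζ_int hdrift
  have hM_zero : ∀ ω, (-M) 0 ω ≤ 0 := fun ω => by simp [M, hz_nonneg 0 ω]
  have hM_bound : ∀ t ω, (-M) (t + 1) ω ≤ ∑ s ∈ range (t + 1), ξ s ω := fun t ω => by
    simp only [M, Pi.neg_apply, sum_sub_distrib]
    linarith [hz_nonneg (t + 1) ω, sum_nonneg fun s (_ : s ∈ range (t + 1)) => hζ_nonneg s ω]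
  have hξ_bdd : ∀ᵐ ω ∂μ, BddAbove (Set.range fun t => ∑ s ∈ range (t + 1), ξ s ω) := by
    filter_upwards [hξ_sum] with ω hω
    exact ⟨_, Set.forall_mem_range.mpr fun t => hω.sum_le_tsum _ fun s _ => hξ_nonneg s ω⟩
  have hM_conv := hM.neg.exists_ae_tendsto_of_le_bddAbove
    (fun t => (StronglyAdapted.stronglyMeasurable_sum_range hξ_meas le_rfl).measurable)
    hM_zero hM_bound hξ_bdd
  filter_upwards [hM_conv, hξ_sum] with ω ⟨c, hc⟩ hξω
  exact tendsto_and_summable_of_tendsto_add_sum_sub (hz_nonneg · ω) (hζ_nonneg · ω) hξω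
    ⟨-c, by simpa [M] using hc.neg⟩
end

section
/- Lex-optimal allocations on complete graphs have at most two ratio levels: suppose G is the complete graph on n ≥ 2 nodes and r ∈ A is lex-optimal. Then the number of distinct sharing-ratio values satisfies K(r) ≤ 2. Moreover, K(r) = 2 if and only if there is a node i_0 whose endowment exceeds the sum of all other endowments, i.e., D_{i_0} > Σ_{j ≠ i_0} D_j, and in that case the lowest level set is L_1(r) = {i_0}. -/
open Finset
open scoped Classical

noncomputable section

namespace SharingEcon

variable {V : Type*} [Fintype V] [DecidableEq V]

/-- The set of neighbors of a set of nodes: `N_S = ⋃ i ∈ S, N_i`. -/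
def nbrs (G : SimpleGraph V) [DecidableRel G.Adj] (S : Finset V) : Finset V :=
  S.biUnion fun i => G.neighborFinset i

/-- The set function `f(S) = ∑_{j ∈ N_S} D_j`. -/
def fS (G : SimpleGraph V) [DecidableRel G.Adj] (D : V → ℝ) (S : Finset V) : ℝ :=
  ∑ j ∈ nbrs G S, D j

/-- The polymatroid polyhedron `A` of a set function `f`. -/
def polyA (f : Finset V → ℝ) : Set (V → ℝ) :=
  {r | (∀ i, 0 ≤ r i) ∧ ∀ S : Finset V, ∑ i ∈ S, r i ≤ f S}

/-- The base `A₀` of the polymatroid. -/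
def polyBase (f : Finset V → ℝ) : Set (V → ℝ) :=
  {r | r ∈ polyA f ∧ ∑ i, r i = f Finset.univ}

/-- The coordinates of a vector sorted in nondecreasing order. -/
def sortedVec (x : V → ℝ) : List ℝ :=
  (Finset.univ.val.map x).sort (· ≤ ·)

/-- `x` is lexicographically at least `y` (comparing sorted coordinate vectors). -/
def lexGE (x y : V → ℝ) : Prop :=
  sortedVec x = sortedVec y ∨
    ∃ k : ℕ, (∀ j < k, (sortedVec x).getD j 0 = (sortedVec y).getD j 0) ∧
      (sortedVec y).getD k 0 < (sortedVec x).getD k 0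

/-- `r` is lexicographically optimal in `A` for the sharing-ratio vectors `(r i / D i)`. -/
def LexOptimal (A : Set (V → ℝ)) (D : V → ℝ) (r : V → ℝ) : Prop :=
  r ∈ A ∧ ∀ r' ∈ A, lexGE (fun i => r i / D i) (fun i => r' i / D i)

/-- The sharing ratio of node `i`. -/
def ratio (D r : V → ℝ) (i : V) : ℝ := r i / D i

/-- The distinct values of the sharing ratios, sorted increasingly. -/
def vals (D r : V → ℝ) : List ℝ :=
  (Finset.univ.image (ratio D r)).sort (· ≤ ·)

/-- The number `K(r)` of distinct sharing-ratio values. -/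
def numLevels (D r : V → ℝ) : ℕ := (vals D r).length

/-- The `k`-th smallest distinct ratio value `v_k(r)` (1-indexed). -/
def v (D r : V → ℝ) (k : ℕ) : ℝ := (vals D r).getD (k - 1) 0

/-- The `k`-th level set `L_k(r)` (1-indexed). -/
def level (D r : V → ℝ) (k : ℕ) : Finset V :=
  Finset.univ.filter fun i => ratio D r i = v D r k

end SharingEcon
namespace SharingEcon

section Helpers

variable {V : Type*} [Fintype V] [DecidableEq V]

lemma sortedVec_coe (x : V → ℝ) : (↑(sortedVec x) : Multiset ℝ) = Finset.univ.val.map x :=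
  Multiset.sort_eq _ _

lemma sortedVec_sorted (x : V → ℝ) : (sortedVec x).Pairwise (· ≤ ·) :=
  Multiset.pairwise_sort _ _

lemma sortedVec_length (x : V → ℝ) : (sortedVec x).length = Fintype.card V := by
  have h := congrArg Multiset.card (sortedVec_coe x)
  simpa using h

lemma mem_sortedVec (x : V → ℝ) (i : V) : x i ∈ sortedVec x := by
  have : x i ∈ (↑(sortedVec x) : Multiset ℝ) := by
    rw [sortedVec_coe]
    exact Multiset.mem_map_of_mem _ (by simp)
  simpa using this

lemma exists_of_mem_sortedVec {x : V → ℝ} {b : ℝ} (hb : b ∈ sortedVec x) : ∃ i, x i = b := by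
  have : b ∈ (↑(sortedVec x) : Multiset ℝ) := by simpa using hb
  rw [sortedVec_coe] at this
  obtain ⟨i, _, hi⟩ := Multiset.mem_map.mp this
  exact ⟨i, hi⟩

lemma card_filter_sortedVec (x : V → ℝ) (p : ℝ → Prop) [DecidablePred p] :
    Multiset.card ((↑(sortedVec x) : Multiset ℝ).filter p) =
      (Finset.univ.filter fun i => p (x i)).card := by
  rw [sortedVec_coe, Multiset.filter_map, Multiset.card_map]
  rw [Finset.card_def, Finset.filter_val]
  congr 1

lemma sortedVec_two_le (x : V → ℝ) (h2 : 2 ≤ Fintype.card V) :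
    ∃ a b t, sortedVec x = a :: b :: t := by
  have hl := sortedVec_length x
  rcases hll : sortedVec x with _ | ⟨a, _ | ⟨b, t⟩⟩
  · rw [hll] at hl; simp at hl; omega
  · rw [hll] at hl; simp at hl; omega
  · exact ⟨a, b, t, rfl⟩

lemma sortedVec_one_le (x : V → ℝ) (h1 : 1 ≤ Fintype.card V) :
    ∃ a t, sortedVec x = a :: t := by
  have hl := sortedVec_length x
  rcases hll : sortedVec x with _ | ⟨a, t⟩
  · rw [hll] at hl; simp at hl; omega
  · exact ⟨a, t, rfl⟩

lemma getD_zero_le (x : V → ℝ) (h1 : 1 ≤ Fintype.card V) (i : V) :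
    (sortedVec x).getD 0 0 ≤ x i := by
  obtain ⟨a, t, heq⟩ := sortedVec_one_le x h1
  have hsort := sortedVec_sorted x
  rw [heq] at hsort
  have hmem := mem_sortedVec x i
  rw [heq] at hmem ⊢
  simp only [List.getD_cons_zero]
  rcases List.mem_cons.mp hmem with h | h
  · exact le_of_eq h.symm
  · exact (List.pairwise_cons.mp hsort).1 _ h

lemma le_getD_zero (x : V → ℝ) (h1 : 1 ≤ Fintype.card V) {a : ℝ} (h : ∀ i, a ≤ x i) :
    a ≤ (sortedVec x).getD 0 0 := by
  obtain ⟨b, t, heq⟩ := sortedVec_one_le x h1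
  have hmem : b ∈ sortedVec x := by rw [heq]; simp
  obtain ⟨i, hi⟩ := exists_of_mem_sortedVec hmem
  rw [heq]
  simpa [← hi] using h i

lemma le_getD_one (x : V → ℝ) (h2 : 2 ≤ Fintype.card V) {c : ℝ} {i0 : V}
    (h : ∀ j, j ≠ i0 → c ≤ x j) : c ≤ (sortedVec x).getD 1 0 := by
  by_contra hbc
  push_neg at hbc
  obtain ⟨a, b, t, heq⟩ := sortedVec_two_le x h2
  have hb : b < c := by rw [heq] at hbc; simpa using hbc
  have hsort := sortedVec_sorted x
  rw [heq] at hsort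
  have hab : a ≤ b := (List.pairwise_cons.mp hsort).1 b (by simp)
  have ha : a < c := lt_of_le_of_lt hab hb
  have hcount : 2 ≤ Multiset.card ((↑(sortedVec x) : Multiset ℝ).filter (· < c)) := by
    rw [heq]
    rw [show ((↑(a :: b :: t) : Multiset ℝ)) = a ::ₘ b ::ₘ (↑t : Multiset ℝ) from rfl]
    rw [Multiset.filter_cons_of_pos (p := fun y => y < c) _ ha,
      Multiset.filter_cons_of_pos (p := fun y => y < c) _ hb]
    simp
  rw [card_filter_sortedVec] at hcount
  have hsub : (Finset.univ.filter fun i => x i < c) ⊆ {i0} := by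
    intro j hj
    simp only [Finset.mem_filter] at hj
    simp only [Finset.mem_singleton]
    by_contra hne
    exact absurd (h j hne) (not_le.mpr hj.2)
  have := Finset.card_le_card hsub
  simp at this
  omega

lemma getD_one_le (x : V → ℝ) (h2 : 2 ≤ Fintype.card V) {i j : V} (hij : i ≠ j) :
    (sortedVec x).getD 1 0 ≤ max (x i) (x j) := by
  by_contra hbc
  push_neg at hbc
  obtain ⟨a, b, t, heq⟩ := sortedVec_two_le x h2
  set m := max (x i) (x j) with hm
  have hb : m < b := by rw [heq] at hbc; simpa using hbc
  have hsort := sortedVec_sorted x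
  rw [heq] at hsort
  have hbt : ∀ y ∈ t, b ≤ y := (List.pairwise_cons.mp (List.pairwise_cons.mp hsort).2).1
  have hcount : Multiset.card ((↑(sortedVec x) : Multiset ℝ).filter (· ≤ m)) ≤ 1 := by
    rw [heq]
    rw [show ((↑(a :: b :: t) : Multiset ℝ)) = a ::ₘ b ::ₘ (↑t : Multiset ℝ) from rfl]
    rw [Multiset.filter_cons, Multiset.filter_cons_of_neg (p := fun y => y ≤ m) _ (not_le.mpr hb)]
    have ht0 : (↑t : Multiset ℝ).filter (· ≤ m) = 0 := by
      rw [Multiset.filter_eq_nil]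
      intro y hy
      exact not_le.mpr (lt_of_lt_of_le hb (hbt y (by simpa using hy)))
    rw [ht0]
    by_cases hpa : a ≤ m <;> simp [hpa]
  rw [card_filter_sortedVec] at hcount
  have hsub : ({i, j} : Finset V) ⊆ Finset.univ.filter fun k => x k ≤ m := by
    intro k hk
    simp only [Finset.mem_insert, Finset.mem_singleton] at hk
    rcases hk with rfl | rfl
    · simp [hm, le_max_left]
    · simp [hm, le_max_right]
  have h2' := Finset.card_le_card hsub
  rw [Finset.card_insert_of_notMem (by simpa using hij), Finset.card_singleton] at h2'
  omega

lemma lexGE_getD_zero {x y : V → ℝ} (h : lexGE x y) :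
    (sortedVec y).getD 0 0 ≤ (sortedVec x).getD 0 0 := by
  rcases h with h | ⟨k, h1, h2⟩
  · rw [h]
  · rcases k with _ | k
    · exact le_of_lt h2
    · exact le_of_eq (h1 0 (Nat.succ_pos k)).symm

lemma lexGE_getD_one {x y : V → ℝ} (h : lexGE x y)
    (h0 : (sortedVec x).getD 0 0 = (sortedVec y).getD 0 0) :
    (sortedVec y).getD 1 0 ≤ (sortedVec x).getD 1 0 := by
  rcases h with h | ⟨k, h1, h2⟩
  · rw [h]
  · rcases k with _ | _ | k
    · exact absurd h0 (ne_of_gt h2)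
    · exact le_of_lt h2
    · exact le_of_eq (h1 1 (by omega)).symm

lemma nbrs_singleton (G : SimpleGraph V) [DecidableRel G.Adj] (hG : G = ⊤) (i : V) :
    nbrs G {i} = Finset.univ.erase i := by
  ext j
  simp [nbrs, SimpleGraph.mem_neighborFinset, hG, ne_comm, eq_comm]

lemma nbrs_big (G : SimpleGraph V) [DecidableRel G.Adj] (hG : G = ⊤) {S : Finset V}
    (hS : 2 ≤ S.card) : nbrs G S = Finset.univ := by
  ext v
  simp only [Finset.mem_univ, iff_true, nbrs, Finset.mem_biUnion]
  obtain ⟨b, hb, hbv⟩ := Finset.exists_mem_ne (s := S) (by omega) v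
  exact ⟨b, hb, by simp [SimpleGraph.mem_neighborFinset, hG, hbv]⟩

lemma fS_singleton (G : SimpleGraph V) [DecidableRel G.Adj] (hG : G = ⊤) (D : V → ℝ) (i : V) :
    fS G D {i} = ∑ j ∈ Finset.univ.erase i, D j := by
  rw [fS, nbrs_singleton G hG]

lemma fS_big (G : SimpleGraph V) [DecidableRel G.Adj] (hG : G = ⊤) (D : V → ℝ) {S : Finset V}
    (hS : 2 ≤ S.card) : fS G D S = ∑ j, D j := by
  rw [fS, nbrs_big G hG hS]

lemma mem_polyA (G : SimpleGraph V) [DecidableRel G.Adj] (hG : G = ⊤) {D w : V → ℝ}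
    (h0 : ∀ i, 0 ≤ w i)
    (h1 : ∀ i, w i ≤ ∑ j ∈ Finset.univ.erase i, D j)
    (h2 : ∑ i, w i ≤ ∑ i, D i) : w ∈ polyA (fS G D) := by
  refine ⟨h0, fun S => ?_⟩
  rcases Nat.lt_or_ge S.card 2 with hc | hc
  · interval_cases h : S.card
    · rw [Finset.card_eq_zero.mp h]
      simp [fS, nbrs]
    · obtain ⟨i, rfl⟩ := Finset.card_eq_one.mp h
      rw [fS_singleton G hG]
      simpa using h1 i
  · rw [fS_big G hG D hc]
    exact le_trans (Finset.sum_le_sum_of_subset_of_nonneg (Finset.subset_univ S)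
      fun i _ _ => h0 i) h2

end Helpers

/-- on the complete graph on `n ≥ 2` nodes, any lex-optimal `r ∈ A` has at most
two sharing-ratio levels; moreover `K(r) = 2` iff some node's endowment exceeds the sum of all
the others', and in that case the lowest level set is exactly that node. -/
theorem complete_graph_at_most_two_levels {V : Type*} [Fintype V] [DecidableEq V]
    (G : SimpleGraph V) [DecidableRel G.Adj] (hG : G = ⊤)
    (hcard : 2 ≤ Fintype.card V)
    (D : V → ℝ) (hD : ∀ i, 0 < D i)
    (r : V → ℝ) (hlex : LexOptimal (polyA (fS G D)) D r) :
    numLevels D r ≤ 2 ∧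
      (numLevels D r = 2 ↔ ∃ i0 : V, ∑ j ∈ Finset.univ.erase i0, D j < D i0) ∧
      (∀ i0 : V, (∑ j ∈ Finset.univ.erase i0, D j < D i0) → level D r 1 = {i0}) := by
  classical
  obtain ⟨⟨hr0, hrA⟩, hlexopt⟩ := hlex
  have h1card : 1 ≤ Fintype.card V := by omega
  set T := ∑ j, D j with hT
  have hDsum : ∀ i : V, ∑ j ∈ Finset.univ.erase i, D j = T - D i := by
    intro i
    rw [hT, ← Finset.sum_erase_add Finset.univ D (Finset.mem_univ i)]
    ring
  have hri_le : ∀ i, r i ≤ T - D i := by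
    intro i
    have h := hrA {i}
    rw [fS_singleton G hG D i, hDsum i] at h
    simpa using h
  have hrsum : ∑ i, r i ≤ T := by
    have h := hrA Finset.univ
    rwa [fS_big G hG D (by simpa [Finset.card_univ] using hcard)] at h
  by_cases hdom : ∃ i0 : V, ∑ j ∈ Finset.univ.erase i0, D j < D i0
  · -- dominant node case
    obtain ⟨i0, hi0⟩ := hdom
    set s := ∑ j ∈ Finset.univ.erase i0, D j with hs_def
    have hsT : s = T - D i0 := hDsum i0
    have hi0ne : (Finset.univ.erase i0).Nonempty := by
      obtain ⟨j, hj⟩ := Fintype.exists_ne_of_one_lt_card (by omega) i0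
      exact ⟨j, Finset.mem_erase.mpr ⟨hj, Finset.mem_univ j⟩⟩
    have hs_pos : 0 < s := Finset.sum_pos (fun j _ => hD j) hi0ne
    set a := s / D i0 with ha_def
    set c := D i0 / s with hc_def
    have ha1 : a < 1 := (div_lt_one (hD i0)).mpr hi0
    have hc1 : 1 < c := (one_lt_div hs_pos).mpr hi0
    have hac : a < c := lt_trans ha1 hc1
    have hcs : c * s = D i0 := div_mul_cancel₀ _ (ne_of_gt hs_pos)
    -- the candidate allocation
    set w : V → ℝ := fun j => if j = i0 then s else c * D j with hw_def
    have hwsum : ∑ i, w i = T := by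
      rw [← Finset.sum_erase_add _ _ (Finset.mem_univ i0)]
      have h1 : ∑ j ∈ Finset.univ.erase i0, w j = c * s := by
        rw [hs_def, Finset.mul_sum]
        exact Finset.sum_congr rfl fun j hj => by
          simp [hw_def, (Finset.mem_erase.mp hj).1]
      rw [h1, hcs]
      simp [hw_def, hsT]
    have hwmem : w ∈ polyA (fS G D) := by
      refine mem_polyA G hG (fun i => ?_) (fun i => ?_) (le_of_eq hwsum)
      · by_cases h : i = i0 <;>
          simp [hw_def, h, le_of_lt hs_pos,
            le_of_lt (mul_pos (lt_trans one_pos hc1) (hD i))]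
      · by_cases h : i = i0
        · subst h
          simp only [hw_def, if_pos rfl]
          rw [← hs_def]
        · have hDi_le : D i ≤ s := by
            rw [hs_def]
            exact Finset.single_le_sum (fun j _ => le_of_lt (hD j))
              (Finset.mem_erase.mpr ⟨h, Finset.mem_univ i⟩)
          have hDi0_le : D i0 ≤ T - D i := by
            rw [← hDsum i]
            exact Finset.single_le_sum (fun j _ => le_of_lt (hD j))
              (Finset.mem_erase.mpr ⟨fun hh => h hh.symm, Finset.mem_univ i0⟩)
          rw [hDsum i]
          simp only [hw_def, if_neg h]
          rw [hc_def, div_mul_eq_mul_div, div_le_iff₀ hs_pos]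
          nlinarith [hD i, hD i0, hDi_le, hDi0_le, hs_pos]
    -- ratios of w
    have hwr0 : ratio D w i0 = a := by simp [ratio, hw_def, ha_def]
    have hwrj : ∀ j, j ≠ i0 → ratio D w j = c := by
      intro j hj
      simp [ratio, hw_def, hj, mul_div_assoc, div_self (ne_of_gt (hD j))]
    have hwall : ∀ i, a ≤ ratio D w i := by
      intro i
      by_cases h : i = i0
      · subst h; rw [hwr0]
      · rw [hwrj i h]; exact le_of_lt hac
    have hw0 : (sortedVec (fun i => w i / D i)).getD 0 0 = a := by
      have hle := getD_zero_le (fun i => w i / D i) h1card i0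
      have hge := le_getD_zero (fun i => w i / D i) h1card hwall
      have hle2 : (sortedVec fun i => w i / D i).getD 0 0 ≤ a :=
        le_trans hle (le_of_eq hwr0)
      linarith
    have hlexw := hlexopt w hwmem
    -- first entry of r's sorted ratios equals a, and ratio r i0 = a
    have hr0ge : a ≤ (sortedVec (fun i => r i / D i)).getD 0 0 := by
      have := lexGE_getD_zero hlexw
      rwa [hw0] at this
    have hri0_le : r i0 / D i0 ≤ a := by
      rw [ha_def, hsT]
      exact (div_le_div_iff_of_pos_right (hD i0)).mpr (hri_le i0)
    have hr0le : (sortedVec (fun i => r i / D i)).getD 0 0 ≤ a :=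
      le_trans (getD_zero_le _ h1card i0) hri0_le
    have hr0eq : (sortedVec (fun i => r i / D i)).getD 0 0 = a := le_antisymm hr0le hr0ge
    have hratio_i0 : ratio D r i0 = a := by
      have h1 := getD_zero_le (fun i => r i / D i) h1card i0
      rw [hr0eq] at h1
      exact le_antisymm hri0_le h1
    have hri0 : r i0 = s := by
      have h' : r i0 / D i0 = s / D i0 := hratio_i0
      rw [div_eq_div_iff (ne_of_gt (hD i0)) (ne_of_gt (hD i0))] at h'
      exact mul_right_cancel₀ (ne_of_gt (hD i0)) h'
    -- second entries
    have hw1 : c ≤ (sortedVec (fun i => w i / D i)).getD 1 0 :=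
      le_getD_one _ hcard (i0 := i0) fun j hj => le_of_eq (hwrj j hj).symm
    have hr1ge : c ≤ (sortedVec (fun i => r i / D i)).getD 1 0 :=
      le_trans hw1 (lexGE_getD_one hlexw (by rw [hr0eq, hw0]))
    have hrj_ge : ∀ j, j ≠ i0 → c ≤ r j / D j := by
      intro j hj
      by_contra hlt
      push_neg at hlt
      have hmax := getD_one_le (fun i => r i / D i) hcard (i := i0) (j := j) (Ne.symm hj)
      have : (sortedVec (fun i => r i / D i)).getD 1 0 < c := by
        apply lt_of_le_of_lt hmax
        apply max_lt _ hlt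
        exact lt_of_eq_of_lt hratio_i0 hac
      linarith
    have hrj_ge' : ∀ j ∈ Finset.univ.erase i0, c * D j ≤ r j := by
      intro j hj
      have := hrj_ge j (Finset.mem_erase.mp hj).1
      rwa [le_div_iff₀ (hD j)] at this
    have hsum_erase_le : ∑ j ∈ Finset.univ.erase i0, r j ≤ ∑ j ∈ Finset.univ.erase i0, c * D j := by
      have h1 : ∑ j ∈ Finset.univ.erase i0, c * D j = D i0 := by
        rw [← Finset.mul_sum, ← hs_def, hcs]
      have h2 : ∑ j ∈ Finset.univ.erase i0, r j = (∑ i, r i) - r i0 := by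
        rw [← Finset.sum_erase_add Finset.univ r (Finset.mem_univ i0)]
        ring
      rw [h1, h2, hri0, hsT]
      linarith
    have hrj_eq : ∀ j ∈ Finset.univ.erase i0, r j = c * D j := by
      by_contra hne
      push_neg at hne
      obtain ⟨j, hj, hjne⟩ := hne
      have hlt : c * D j < r j := lt_of_le_of_ne (hrj_ge' j hj) (Ne.symm hjne)
      have : ∑ j ∈ Finset.univ.erase i0, c * D j < ∑ j ∈ Finset.univ.erase i0, r j :=
        Finset.sum_lt_sum hrj_ge' ⟨j, hj, hlt⟩
      linarith
    have hratio_j : ∀ j, j ≠ i0 → ratio D r j = c := by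
      intro j hj
      have := hrj_eq j (Finset.mem_erase.mpr ⟨hj, Finset.mem_univ j⟩)
      rw [ratio, this, mul_div_assoc, div_self (ne_of_gt (hD j)), mul_one]
    -- the image of ratios
    have himg : Finset.univ.image (ratio D r) = {a, c} := by
      ext y
      simp only [Finset.mem_image, Finset.mem_univ, true_and, Finset.mem_insert,
        Finset.mem_singleton]
      constructor
      · rintro ⟨i, rfl⟩
        by_cases h : i = i0
        · subst h; left; exact hratio_i0
        · right; exact hratio_j i h
      · rintro (rfl | rfl)
        · exact ⟨i0, hratio_i0⟩
        · obtain ⟨j, hj⟩ := Fintype.exists_ne_of_one_lt_card (by omega) i0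
          exact ⟨j, hratio_j j hj⟩
    have hvals : vals D r = [a, c] := by
      rw [vals, himg]
      apply (fun hp hs => List.Perm.eq_of_pairwise' (Multiset.pairwise_sort _ _) hs hp)
        (Multiset.coe_eq_coe.mp ?_) ?_
      · rw [Multiset.sort_eq]
        rw [show ({a, c} : Finset ℝ) = insert a {c} from rfl,
          Finset.insert_val_of_notMem (by simp [ne_of_lt hac])]
        rfl
      · exact List.pairwise_cons.mpr ⟨by simp [le_of_lt hac], by simp⟩
    have hK : numLevels D r = 2 := by rw [numLevels, hvals]; rfl
    have hv1 : v D r 1 = a := by rw [v, hvals]; rfl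
    have hlevel : level D r 1 = {i0} := by
      ext i
      simp only [level, Finset.mem_filter, Finset.mem_univ, true_and, Finset.mem_singleton, hv1]
      constructor
      · intro h
        by_contra hne
        rw [hratio_j i hne] at h
        exact absurd h.symm (ne_of_lt hac)
      · rintro rfl; exact hratio_i0
    refine ⟨by omega, ⟨fun _ => ⟨i0, hi0⟩, fun _ => hK⟩, fun i0' hi0' => ?_⟩
    have : i0' = i0 := by
      by_contra hne
      have h1 : D i0 ≤ ∑ j ∈ Finset.univ.erase i0', D j :=
        Finset.single_le_sum (fun j _ => le_of_lt (hD j))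
          (Finset.mem_erase.mpr ⟨fun h => hne h.symm, Finset.mem_univ i0⟩)
      have h2 : D i0' ≤ ∑ j ∈ Finset.univ.erase i0, D j :=
        Finset.single_le_sum (fun j _ => le_of_lt (hD j))
          (Finset.mem_erase.mpr ⟨hne, Finset.mem_univ i0'⟩)
      linarith
    rw [this]
    exact hlevel
  · -- no dominant node: all ratios are 1
    push_neg at hdom
    have hdmem : D ∈ polyA (fS G D) := by
      refine mem_polyA G hG (fun i => le_of_lt (hD i)) (fun i => hdom i) le_rfl
    have hlexD := hlexopt D hdmem
    obtain ⟨i1⟩ : Nonempty V := Fintype.card_pos_iff.mp (by omega)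
    have hD0 : (sortedVec (fun i => D i / D i)).getD 0 0 = 1 := by
      have hle := getD_zero_le (fun i => D i / D i) h1card i1
      have hge := le_getD_zero (fun i => D i / D i) h1card
        (fun i => le_of_eq (div_self (ne_of_gt (hD i))).symm)
      have hle2 : (sortedVec (fun i => D i / D i)).getD 0 0 ≤ 1 :=
        le_trans hle (le_of_eq (div_self (ne_of_gt (hD i1))))
      linarith
    have hr0ge : (1 : ℝ) ≤ (sortedVec (fun i => r i / D i)).getD 0 0 := by
      have := lexGE_getD_zero hlexD
      rwa [hD0] at this
    have hge1 : ∀ i, D i ≤ r i := by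
      intro i
      have h1 := getD_zero_le (fun i => r i / D i) h1card i
      have : (1 : ℝ) ≤ r i / D i := le_trans hr0ge h1
      rwa [le_div_iff₀ (hD i), one_mul] at this
    have heq : ∀ i, r i = D i := by
      by_contra hne
      push_neg at hne
      obtain ⟨i, hi⟩ := hne
      have hlt : D i < r i := lt_of_le_of_ne (hge1 i) (Ne.symm hi)
      have : ∑ j, D j < ∑ j, r j :=
        Finset.sum_lt_sum (fun j _ => hge1 j) ⟨i, Finset.mem_univ i, hlt⟩
      linarith
    have hratio1 : ∀ i, ratio D r i = 1 := by
      intro i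
      rw [ratio, heq i, div_self (ne_of_gt (hD i))]
    have himg : Finset.univ.image (ratio D r) = {1} := by
      ext y
      simp only [Finset.mem_image, Finset.mem_univ, true_and, Finset.mem_singleton]
      constructor
      · rintro ⟨i, rfl⟩; exact hratio1 i
      · rintro rfl
        exact ⟨i1, hratio1 i1⟩
    have hK : numLevels D r = 1 := by
      rw [numLevels, vals, himg, Finset.length_sort]
      rfl
    refine ⟨by omega, ⟨fun h => by omega, fun h => ?_⟩,
      fun i0 h => absurd h (not_lt.mpr (hdom i0))⟩
    obtain ⟨i0, hlt⟩ := h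
    exact absurd hlt (not_lt.mpr (hdom i0))

end SharingEcon
end
end

section
/- Achievability of the greedy extreme points by a fixed-priority policy: on a probability space, suppose for each node i the generated resources D_i(t), t = 1,2,…, are i.i.d. random variables with 0 ≤ D_i(t) ≤ B and E[D_i(t)] = D_i > 0 (the vectors (D_i(t))_{i∈N} being i.i.d. across t). Let n = |N|, let σ : {1,…,n} → N be a bijection, and set S_σ(i) = {σ(1),…,σ(i)}. Consider the policy π^σ under which, at every time t, every node in N_{σ(1)} gives all its generated resource to σ(1), and for each k = 2,…,n every node in N_{σ(k)} − ∪_{l=1}^{k−1} N_{σ(l)} gives all its generated resource to σ(k). Then almost surely the time-averaged received resource of each node converges: (1/t) Σ_{τ=1}^{t} R_{σ(1)}(τ) → f(S_σ(1)) and (1/t) Σ_{τ=1}^{t} R_{σ(i)}(τ) → f(S_σ(i)) − f(S_σ(i−1)) for 2 ≤ i ≤ n, where R_j(τ) is the total resource node j receives at time τ. -/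
/-!
By the strong law of large numbers, almost surely the time average of every node's generated
resource converges to its mean `D i`. Under `π^σ` the node `σ k` receives exactly the resources
of `T k = N_{σ k} \ N_{S_σ(k)}`, and since `N_{S_σ(k+1)} = N_{σ k} ∪ N_{S_σ(k)}`, the means of
these add up to `f(S_σ(k+1)) - f(S_σ(k))`.
-/

open Finset
open scoped Classical

noncomputable section

open MeasureTheory ProbabilityTheory Filter

namespace SharingEcon

section StrongLaw

variable {Ω : Type*} {m : MeasurableSpace Ω} {μ : Measure Ω}

theorem ae_tendsto_sum_Icc_div (X : ℕ → Ω → ℝ) (hint : Integrable (X 1) μ)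
    (hindep : Pairwise fun a b => X a ⟂ᵢ[μ] X b) (hident : ∀ t, IdentDistrib (X t) (X 1) μ μ) :
    ∀ᵐ ω ∂μ, Tendsto (fun t : ℕ => (∑ τ ∈ Icc 1 t, X τ ω) / t) atTop (nhds μ[X 1]) := by
  have hshift := strong_law_ae_real (fun τ => X (τ + 1)) hint
    (fun _ _ hab => hindep (by omega)) (fun τ => hident (τ + 1))
  filter_upwards [hshift] with ω hω
  refine hω.congr fun t => ?_
  rw [← Ico_add_one_right_eq_Icc, sum_Ico_eq_sum_range, Nat.add_sub_cancel]
  simp only [add_comm]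

theorem ae_forall_tendsto_sum_Icc_div {ι : Type*} [Countable ι] (X : ℕ → Ω → ι → ℝ)
    (hint : ∀ i, Integrable (fun ω => X 1 ω i) μ) (hindep : iIndepFun X μ)
    (hident : ∀ t, IdentDistrib (X t) (X 1) μ μ) :
    ∀ᵐ ω ∂μ, ∀ i, Tendsto (fun t : ℕ => (∑ τ ∈ Icc 1 t, X τ ω i) / t) atTop
      (nhds (∫ ω, X 1 ω i ∂μ)) :=
  ae_all_iff.2 fun i => ae_tendsto_sum_Icc_div (fun τ ω => X τ ω i) (hint i)
    (fun _ _ hab => (hindep.indepFun hab).comp (measurable_pi_apply i) (measurable_pi_apply i))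
    (fun t => (hident t).comp (measurable_pi_apply i))

end StrongLaw

theorem image_filter_lt_succ {α : Type*} [DecidableEq α] {n : ℕ} (σ : Fin n → α) (k : Fin n) :
    (univ.filter fun j : Fin n => (j : ℕ) < k + 1).image σ =
      insert (σ k) ((univ.filter fun j : Fin n => (j : ℕ) < k).image σ) := by
  rw [← image_insert]
  congr 1
  ext j
  simp only [mem_filter, mem_univ, true_and, mem_insert, Fin.ext_iff]
  omega

section Greedy

variable {V : Type*} [Fintype V] [DecidableEq V] (G : SimpleGraph V) [DecidableRel G.Adj]

theorem nbrs_insert (a : V) (S : Finset V) :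
    nbrs G (insert a S) = G.neighborFinset a ∪ nbrs G S :=
  biUnion_insert

theorem fS_insert_sub_fS (D : V → ℝ) (a : V) (S : Finset V) :
    fS G D (insert a S) - fS G D S = ∑ j ∈ G.neighborFinset a \ nbrs G S, D j := by
  rw [fS, fS, nbrs_insert, sub_eq_iff_eq_add, ← sum_sdiff (subset_union_right),
    union_sdiff_right]

theorem biUnion_filter_lt_neighborFinset {n : ℕ} (σ : Fin n → V) (k : Fin n) :
    ((univ.filter fun j : Fin n => j < k).biUnion fun l => G.neighborFinset (σ l)) =
      nbrs G ((univ.filter fun j : Fin n => (j : ℕ) < k).image σ) := by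
  rw [nbrs, image_biUnion]
  rfl

end Greedy

theorem priority_policy_achieves_greedy_point_general {V : Type*} [Fintype V] [DecidableEq V]
    {Ω : Type*} [MeasureSpace Ω] [IsProbabilityMeasure (ℙ : Measure Ω)]
    (G : SimpleGraph V) [DecidableRel G.Adj]
    (D : V → ℝ) (B : ℝ)
    (Dgen : ℕ → Ω → V → ℝ)
    (hbdd : ∀ t ω i, 0 ≤ Dgen t ω i ∧ Dgen t ω i ≤ B)
    (hindep : iIndepFun Dgen ℙ)
    (hident : ∀ t, IdentDistrib (Dgen t) (Dgen 1) ℙ ℙ)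
    (hmean : ∀ t i, ∫ ω, Dgen t ω i = D i)
    (n : ℕ) (σ : Fin n ≃ V)
    (Sσ : ℕ → Finset V)
    (hSσ : ∀ m : ℕ, Sσ m = (Finset.univ.filter fun j : Fin n => (j : ℕ) < m).image σ)
    -- `T k` is the set of nodes that give their resource to `σ k` under policy `π^σ`
    (T : Fin n → Finset V)
    (hT : ∀ k : Fin n, T k =
      G.neighborFinset (σ k) \
        (Finset.univ.filter fun j : Fin n => j < k).biUnion fun l => G.neighborFinset (σ l))
    (R : ℕ → Ω → V → ℝ)
    (hR : ∀ τ ω (k : Fin n), R τ ω (σ k) = ∑ i ∈ T k, Dgen τ ω i) :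
    ∀ᵐ ω, ∀ k : Fin n,
      Tendsto (fun t : ℕ => (∑ τ ∈ Finset.Icc 1 t, R τ ω (σ k)) / (t : ℝ)) atTop
        (nhds (fS G D (Sσ ((k : ℕ) + 1)) - fS G D (Sσ (k : ℕ)))) := by
  have hgap : ∀ k : Fin n, fS G D (Sσ (k + 1)) - fS G D (Sσ k) = ∑ i ∈ T k, D i := fun k => by
    rw [hSσ, hSσ, image_filter_lt_succ, fS_insert_sub_fS, hT, biUnion_filter_lt_neighborFinset]
  have hint : ∀ i, Integrable (fun ω => Dgen 1 ω i) := fun i =>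
    .of_bound ((hident 1).aemeasurable_fst.eval i).aestronglyMeasurable B
      (.of_forall fun ω => abs_le.2 ⟨by linarith [hbdd 1 ω i], (hbdd 1 ω i).2⟩)
  filter_upwards [ae_forall_tendsto_sum_Icc_div Dgen hint hindep hident] with ω hω k
  have havg : ∀ t : ℕ, (∑ τ ∈ Icc 1 t, R τ ω (σ k)) / t =
      ∑ i ∈ T k, (∑ τ ∈ Icc 1 t, Dgen τ ω i) / t := fun t => by
    simp only [hR, sum_comm (s := Icc 1 t), sum_div]
  simp only [havg, hgap, ← hmean 1]
  exact tendsto_finsetSum _ fun i _ => hω i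

/-- under the fixed-priority policy `π^σ` (each node in
`N_{σ(k)} − ∪_{l<k} N_{σ(l)}` always gives all its generated resource to `σ(k)`), almost surely
the time-averaged received resources converge to the greedy extreme point:
`(1/t) Σ_{τ=1}^t R_{σ(k)}(τ) → f(S_σ(k+1)) − f(S_σ(k))` (0-based indexing of `σ`, with
`S_σ(m) = {σ(0),…,σ(m−1)}`, `S_σ(0) = ∅`, `f(∅) = 0`). -/
theorem priority_policy_achieves_greedy_point {V : Type*} [Fintype V] [DecidableEq V]
    {Ω : Type*} [MeasureSpace Ω] [IsProbabilityMeasure (ℙ : Measure Ω)]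
    (G : SimpleGraph V) [DecidableRel G.Adj]
    (hconn : G.Connected) (hniso : ∀ i, (G.neighborFinset i).Nonempty)
    (D : V → ℝ) (hD : ∀ i, 0 < D i) (B : ℝ)
    (Dgen : ℕ → Ω → V → ℝ)
    (hmeas : ∀ t, Measurable (Dgen t))
    (hbdd : ∀ t ω i, 0 ≤ Dgen t ω i ∧ Dgen t ω i ≤ B)
    (hindep : iIndepFun Dgen ℙ)
    (hident : ∀ t, IdentDistrib (Dgen t) (Dgen 1) ℙ ℙ)
    (hmean : ∀ t i, ∫ ω, Dgen t ω i = D i)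
    (n : ℕ) (hn : n = Fintype.card V) (σ : Fin n ≃ V)
    (Sσ : ℕ → Finset V)
    (hSσ : ∀ m : ℕ, Sσ m = (Finset.univ.filter fun j : Fin n => (j : ℕ) < m).image σ)
    -- `T k` is the set of nodes that give their resource to `σ k` under policy `π^σ`
    (T : Fin n → Finset V)
    (hT : ∀ k : Fin n, T k =
      G.neighborFinset (σ k) \
        (Finset.univ.filter fun j : Fin n => j < k).biUnion fun l => G.neighborFinset (σ l))
    (R : ℕ → Ω → V → ℝ)
    (hR : ∀ τ ω (k : Fin n), R τ ω (σ k) = ∑ i ∈ T k, Dgen τ ω i) :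
    ∀ᵐ ω, ∀ k : Fin n,
      Tendsto (fun t : ℕ => (∑ τ ∈ Finset.Icc 1 t, R τ ω (σ k)) / (t : ℝ)) atTop
        (nhds (fS G D (Sσ ((k : ℕ) + 1)) - fS G D (Sσ (k : ℕ)))) :=
  priority_policy_achieves_greedy_point_general G D B Dgen hbdd hindep hident hmean n σ Sσ hSσ T hT
    R hR

end SharingEcon
end
end
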